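/- arXiv:2112.06408 — 5 statements merged into one kernel-verified Lean document; each statement's English description precedes it below -/
import Mathlib

section
/- Let K ∈ ℂ^{n×n} be invertible, M ∈ ℂ^{n×n} with I + M invertible, and r, s ∈ ℂ^{n×1} satisfy KM − MK = r sᵀ. Define the scalar S^{(i,j)} = sᵀ K^j (I + M)⁻¹ K^i r for integers i, j. Then S^{(0,j)} S^{(i,0)} = S^{(i+1,j)} − S^{(i,j+1)} for all i, j ∈ ℤ. -/
open Matrix

theorem cauchy_matrix_S_recurrence (n : ℕ)
    (K M : Matrix (Fin n) (Fin n) ℂ) (r s : Matrix (Fin n) (Fin 1) ℂ)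
    (hK : IsUnit K.det) (hIM : IsUnit (1 + M).det)
    (hSyl : K * M - M * K = r * s.transpose)
    (S : ℤ → ℤ → Matrix (Fin 1) (Fin 1) ℂ)
    (hS : ∀ i j : ℤ, S i j = s.transpose * K ^ j * (1 + M)⁻¹ * K ^ i * r) :
    ∀ i j : ℤ, S 0 j * S i 0 = S (i + 1) j - S i (j + 1) := by
  set N := (1 + M)⁻¹ with hN
  have hN1 : (1 + M) * N = 1 := mul_nonsing_inv _ hIM
  have hN2 : N * (1 + M) = 1 := nonsing_inv_mul _ hIM
  have hc : ∀ m : ℤ, K ^ m * K = K * K ^ m := by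
    intro m
    calc K ^ m * K = K ^ m * K ^ (1 : ℤ) := by rw [zpow_one]
    _ = K ^ (m + 1) := (zpow_add hK m 1).symm
    _ = K ^ (1 + m) := by rw [add_comm]
    _ = K ^ (1 : ℤ) * K ^ m := zpow_add hK 1 m
    _ = K * K ^ m := by rw [zpow_one]
  have key : N * (r * s.transpose) * N = N * K - K * N := by
    rw [← hSyl]
    have h : K * M - M * K = K * (1 + M) - (1 + M) * K := by noncomm_ring
    rw [h]
    calc N * (K * (1 + M) - (1 + M) * K) * N
        = N * K * ((1 + M) * N) - N * (1 + M) * (K * N) := by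
          simp only [Matrix.mul_sub, Matrix.sub_mul, Matrix.mul_assoc]
      _ = N * K - K * N := by rw [hN1, hN2]; simp
  intro i j
  rw [hS, hS, hS, hS, zpow_add_one hK, zpow_add_one hK]
  simp only [zpow_zero, Matrix.mul_one, Matrix.one_mul]
  have expand : s.transpose * K ^ j * N * r * (s.transpose * N * K ^ i * r)
      = s.transpose * K ^ j * (N * (r * s.transpose) * N) * (K ^ i * r) := by
    simp only [Matrix.mul_assoc]
  rw [expand, key]
  simp only [Matrix.mul_sub, Matrix.sub_mul, ← Matrix.mul_assoc]
  rw [Matrix.mul_assoc (s.transpose * K ^ j * N) (K ^ i) K, hc i, ← Matrix.mul_assoc]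
end

section
/- Under the hypotheses of the Sylvester scheme (KM − MK = r sᵀ, K and I+M invertible, S^{(i,j)} := sᵀ K^j (I+M)⁻¹ K^i r), for every positive integer m and all integers i, j: S^{(i, j+m)} = S^{(i+m, j)} − Σ_{l=0}^{m−1} S^{(m−1−l, j)} S^{(i, l)}. -/
open Matrix Finset

theorem cauchy_matrix_S_shift_recurrence (n : ℕ)
    (K M : Matrix (Fin n) (Fin n) ℂ) (r s : Matrix (Fin n) (Fin 1) ℂ)
    (hK : IsUnit K.det) (hIM : IsUnit (1 + M).det)
    (hSyl : K * M - M * K = r * s.transpose)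
    (S : ℤ → ℤ → Matrix (Fin 1) (Fin 1) ℂ)
    (hS : ∀ i j : ℤ, S i j = s.transpose * K ^ j * (1 + M)⁻¹ * K ^ i * r) :
    ∀ m : ℕ, 0 < m → ∀ i j : ℤ,
      S i (j + m) = S (i + m) j
        - ∑ l ∈ Finset.range m, S ((m : ℤ) - 1 - l) j * S i l := by
  have hN : (1 + M) * (1 + M)⁻¹ = 1 := Matrix.mul_nonsing_inv _ hIM
  have hN' : (1 + M)⁻¹ * (1 + M) = 1 := Matrix.nonsing_inv_mul _ hIM
  have e1 : (1 + M) * K = K * (1 + M) - r * s.transpose := by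
    rw [← hSyl]; noncomm_ring
  have key : K * (1 + M)⁻¹
      = (1 + M)⁻¹ * K - (1 + M)⁻¹ * (r * s.transpose) * (1 + M)⁻¹ := by
    have h2 : K * (1 + M)⁻¹ = (1 + M)⁻¹ * ((1 + M) * K) * (1 + M)⁻¹ := by
      rw [← Matrix.mul_assoc, hN', Matrix.one_mul]
    rw [h2, e1]
    simp [Matrix.sub_mul, Matrix.mul_sub, Matrix.mul_assoc, hN]
  have base : ∀ i j : ℤ, S i (j + 1) = S (i + 1) j - S 0 j * S i 0 := by
    intro i j
    rw [hS, hS, hS, hS]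
    have hcomm : K * K ^ i = K ^ i * K := by
      rw [← Matrix.zpow_add_one hK i, ← Matrix.zpow_one_add hK i, add_comm]
    rw [Matrix.zpow_add_one hK j, Matrix.zpow_add_one hK i, zpow_zero]
    simp only [Matrix.mul_assoc, key, Matrix.mul_sub, Matrix.sub_mul,
      Matrix.mul_one, Matrix.one_mul, hcomm]
  intro m
  induction m with
  | zero => intro h; exact absurd h (lt_irrefl 0)
  | succ m IH =>
    intro _ i j
    rcases Nat.eq_zero_or_pos m with hm | hm
    · subst hm
      simpa using base i j
    · have IH1 := IH hm i (j + 1)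
      have IH0 := IH hm i 0
      push_cast
      have hidx : j + ((m : ℤ) + 1) = (j + 1) + m := by ring
      rw [hidx, IH1, base (i + m) j]
      have hsum : ∑ l ∈ range m, S ((m : ℤ) - 1 - l) (j + 1) * S i l
          = ∑ l ∈ range m, S ((m : ℤ) - l) j * S i l
            - S 0 j * ∑ l ∈ range m, S ((m : ℤ) - 1 - l) 0 * S i l := by
        rw [Finset.mul_sum, ← Finset.sum_sub_distrib]
        refine Finset.sum_congr rfl fun l _ => ?_
        have h1 : ((m : ℤ) - 1 - l) + 1 = (m : ℤ) - l := by ring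
        rw [base ((m : ℤ) - 1 - l) j, h1, Matrix.sub_mul, Matrix.mul_assoc]
      rw [hsum]
      have hS0 : ∑ l ∈ range m, S ((m : ℤ) - 1 - l) 0 * S i l
          = S (i + m) 0 - S i m := by
        rw [zero_add] at IH0
        rw [IH0]; abel
      rw [hS0, Matrix.mul_sub, Finset.sum_range_succ,
        show ((m : ℤ)) + 1 - 1 = (m : ℤ) from by ring, sub_self,
        show i + ((m : ℤ) + 1) = i + (m : ℤ) + 1 from by ring]
      abel
end

section
/- Let k ∈ ℂ, k ≠ 0, ρ, σ ∈ ℂ with |ρσ|² ≠ (|k|²+1)². Define s₁ = −(1/|k|²)·|ρσ|²(|k|²+1)/((|k|²+1)² − |ρσ|²), s₃ = (1/k)·ρσ(|k|²+1)²/((|k|²+1)² − |ρσ|²), s₄ = −|ρσ|²(|k|²+1)/((|k|²+1)² − |ρσ|²), and v = (1−s₁, −s₃*; −s₃, 1−s₄). Then det v = 1 and v is Hermitian. -/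
open Matrix Complex

theorem one_soliton_det_and_hermitian
    (k ρ σ : ℂ) (hk : k ≠ 0)
    (hne : Complex.normSq (ρ * σ) ≠ (Complex.normSq k + 1) ^ 2)
    (s₁ s₄ s₃ : ℂ)
    (hs₁ : s₁ = -((1 : ℂ) / (Complex.normSq k : ℂ)) *
        ((Complex.normSq (ρ * σ) : ℂ) * ((Complex.normSq k : ℂ) + 1) /
          (((Complex.normSq k : ℂ) + 1) ^ 2 - (Complex.normSq (ρ * σ) : ℂ))))
    (hs₃ : s₃ = ((1 : ℂ) / k) *
        (ρ * σ * ((Complex.normSq k : ℂ) + 1) ^ 2 /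
          (((Complex.normSq k : ℂ) + 1) ^ 2 - (Complex.normSq (ρ * σ) : ℂ))))
    (hs₄ : s₄ = -((Complex.normSq (ρ * σ) : ℂ) * ((Complex.normSq k : ℂ) + 1) /
          (((Complex.normSq k : ℂ) + 1) ^ 2 - (Complex.normSq (ρ * σ) : ℂ))))
    (v : Matrix (Fin 2) (Fin 2) ℂ)
    (hv : v = !![1 - s₁, -(starRingEnd ℂ) s₃; -s₃, 1 - s₄]) :
    v.det = 1 ∧ v.conjTranspose = v := by
  have hD : (((Complex.normSq k : ℂ) + 1) ^ 2 - (Complex.normSq (ρ * σ) : ℂ)) ≠ 0 := by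
    intro h
    apply hne
    have h2 : ((Complex.normSq (ρ * σ) : ℂ)) = (((Complex.normSq k + 1) ^ 2 : ℝ) : ℂ) := by
      push_cast
      linear_combination -h
    exact_mod_cast h2
  have hkk : (Complex.normSq k : ℂ) ≠ 0 := by
    simpa [Complex.normSq_eq_zero] using hk
  have hck : (starRingEnd ℂ) k ≠ 0 := by simpa using hk
  have hmk : k * (starRingEnd ℂ) k = (Complex.normSq k : ℂ) := Complex.mul_conj k
  have hmm : (ρ * σ) * (starRingEnd ℂ) (ρ * σ) = (Complex.normSq (ρ * σ) : ℂ) :=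
    Complex.mul_conj (ρ * σ)
  have hcs : (starRingEnd ℂ) s₃ = ((1 : ℂ) / (starRingEnd ℂ) k) *
      ((starRingEnd ℂ) (ρ * σ) * ((Complex.normSq k : ℂ) + 1) ^ 2 /
        (((Complex.normSq k : ℂ) + 1) ^ 2 - (Complex.normSq (ρ * σ) : ℂ))) := by
    rw [hs₃]
    simp only [_root_.map_mul, map_div₀, map_pow, map_sub, map_add, _root_.map_one, Complex.conj_ofReal]
  have hprod : (starRingEnd ℂ) s₃ * s₃ =
      (Complex.normSq (ρ * σ) : ℂ) * ((Complex.normSq k : ℂ) + 1) ^ 4 /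
        ((Complex.normSq k : ℂ) *
          (((Complex.normSq k : ℂ) + 1) ^ 2 - (Complex.normSq (ρ * σ) : ℂ)) ^ 2) := by
    rw [hcs, hs₃]
    have e : ((1 : ℂ) / (starRingEnd ℂ) k) *
        ((starRingEnd ℂ) (ρ * σ) * ((Complex.normSq k : ℂ) + 1) ^ 2 /
          (((Complex.normSq k : ℂ) + 1) ^ 2 - (Complex.normSq (ρ * σ) : ℂ))) *
        (((1 : ℂ) / k) *
        (ρ * σ * ((Complex.normSq k : ℂ) + 1) ^ 2 /
          (((Complex.normSq k : ℂ) + 1) ^ 2 - (Complex.normSq (ρ * σ) : ℂ)))) =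
        ((starRingEnd ℂ) (ρ * σ) * ((Complex.normSq k : ℂ) + 1) ^ 2 *
          (ρ * σ * ((Complex.normSq k : ℂ) + 1) ^ 2)) /
        ((((Complex.normSq k : ℂ) + 1) ^ 2 - (Complex.normSq (ρ * σ) : ℂ)) * (starRingEnd ℂ) k *
          ((((Complex.normSq k : ℂ) + 1) ^ 2 - (Complex.normSq (ρ * σ) : ℂ)) * k)) := by
      rw [one_div, one_div, inv_mul_eq_div, inv_mul_eq_div, div_div, div_div,
        div_mul_div_comm]
    rw [e, div_eq_div_iff (mul_ne_zero (mul_ne_zero hD hck) (mul_ne_zero hD hk))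
      (mul_ne_zero hkk (pow_ne_zero 2 hD))]
    linear_combination ((((Complex.normSq k : ℂ) + 1) ^ 4 * (Complex.normSq k : ℂ) *
        (((Complex.normSq k : ℂ) + 1) ^ 2 - (Complex.normSq (ρ * σ) : ℂ)) ^ 2) * hmm) -
      ((((Complex.normSq k : ℂ) + 1) ^ 4 * (Complex.normSq (ρ * σ) : ℂ) *
        (((Complex.normSq k : ℂ) + 1) ^ 2 - (Complex.normSq (ρ * σ) : ℂ)) ^ 2) * hmk)
  constructor
  · rw [hv]
    rw [Matrix.det_fin_two_of]
    have h2 : -(starRingEnd ℂ) s₃ * -s₃ = (starRingEnd ℂ) s₃ * s₃ := by ring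
    rw [h2, hprod, hs₁, hs₄]
    set x := ((Complex.normSq k : ℝ) : ℂ) with hx
    set y := ((Complex.normSq (ρ * σ) : ℝ) : ℂ) with hy
    field_simp
    ring
  · rw [hv, hs₁, hs₄]
    refine Matrix.ext fun i j => ?_
    fin_cases i <;> fin_cases j <;>
      simp [Matrix.conjTranspose_apply, map_div₀, Complex.conj_ofReal]
end

section
/- Let K₁ ∈ GL(N, ℂ) such that K₁ and −(K₁*)⁻¹ share no eigenvalues. Suppose M₁, r₁, s₁ satisfy K₁M₁ + M₁(K₁*)⁻¹ = −r₁ s₁† (K₁*)⁻¹, and set M₂ := M₁*, r₂ := (K₁*)⁻¹ r₁*, s₂ := −(K₁†)⁻¹ s₁*, K₂ := −(K₁*)⁻¹. Then K₂M₂ − M₂K₁ = r₂ s₁ᵀ, i.e., M₂ solves the second Sylvester equation K₂M₂ − M₂K₁ = r₂ s₁ᵀ. -/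
/-!
Entrywise conjugation respects sums and products of matrices and commutes with inversion, so
conjugating the first Sylvester equation gives `K₁* M₁* + M₁* K₁⁻¹ = -r₁* s₁ᵀ K₁⁻¹`. Multiplying
by `(K₁*)⁻¹` on the left and by `K₁` on the right and rearranging yields the second equation.
-/

open Matrix

namespace Matrix

variable {m n R : Type*} [CommRing R]

theorem neg_inv_mul_sub_mul_eq_inv_mul [Fintype n] [DecidableEq n] {A B X Y : Matrix n n R}
    (hA : IsUnit A.det) (hB : IsUnit B.det) (h : A * X + X * B⁻¹ = -(Y * B⁻¹)) :
    -A⁻¹ * X - X * B = A⁻¹ * Y := by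
  have h' := congrArg (A⁻¹ * · * B) h
  simp only [Matrix.mul_add, Matrix.add_mul, Matrix.mul_neg, Matrix.neg_mul, ← Matrix.mul_assoc,
    nonsing_inv_mul _ hA, Matrix.one_mul] at h'
  simp only [Matrix.mul_assoc, nonsing_inv_mul _ hB, Matrix.mul_one] at h'
  rw [Matrix.neg_mul, neg_eq_iff_eq_neg.mp h'.symm]
  abel

section StarRing

variable [StarRing R]

theorem map_starRingEnd_eq_conjTranspose_transpose (A : Matrix m n R) :
    A.map (starRingEnd R) = Aᵀᴴ := rfl

theorem map_starRingEnd_map_starRingEnd (A : Matrix m n R) :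
    (A.map (starRingEnd R)).map (starRingEnd R) = A := by
  ext; simp

theorem conjTranspose_map_starRingEnd (A : Matrix m n R) : Aᴴ.map (starRingEnd R) = Aᵀ := by
  ext; simp [starRingEnd_apply]

theorem map_starRingEnd_nonsing_inv [Fintype n] [DecidableEq n] (A : Matrix n n R) :
    A⁻¹.map (starRingEnd R) = (A.map (starRingEnd R))⁻¹ := by
  rw [map_starRingEnd_eq_conjTranspose_transpose, map_starRingEnd_eq_conjTranspose_transpose,
    transpose_nonsing_inv, conjTranspose_nonsing_inv]

end StarRing

end Matrix

theorem conjugate_sylvester_equation_general (N : ℕ)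
    (K₁ M₁ : Matrix (Fin N) (Fin N) ℂ)
    (r₁ s₁ : Matrix (Fin N) (Fin 1) ℂ)
    (hK : IsUnit K₁.det)
    (hSyl : K₁ * M₁ + M₁ * (K₁.map (starRingEnd ℂ))⁻¹ =
      -(r₁ * s₁.conjTranspose * (K₁.map (starRingEnd ℂ))⁻¹))
    (K₂ M₂ : Matrix (Fin N) (Fin N) ℂ) (r₂ : Matrix (Fin N) (Fin 1) ℂ)
    (hK₂ : K₂ = -(K₁.map (starRingEnd ℂ))⁻¹)
    (hM₂ : M₂ = M₁.map (starRingEnd ℂ))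
    (hr₂ : r₂ = (K₁.map (starRingEnd ℂ))⁻¹ * r₁.map (starRingEnd ℂ)) :
    K₂ * M₂ - M₂ * K₁ = r₂ * s₁.transpose := by
  have hK_conj : IsUnit (K₁.map (starRingEnd ℂ)).det :=
    (RingHom.map_det (starRingEnd ℂ) K₁).symm ▸ hK.map _
  have hSyl_conj : K₁.map (starRingEnd ℂ) * M₁.map (starRingEnd ℂ) +
      M₁.map (starRingEnd ℂ) * K₁⁻¹ = -(r₁.map (starRingEnd ℂ) * s₁ᵀ * K₁⁻¹) := by
    have h := congrArg (·.map (starRingEnd ℂ)) hSyl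
    simpa only [Matrix.map_add _ (map_add (starRingEnd ℂ)),
      Matrix.map_neg _ (map_neg (starRingEnd ℂ)), Matrix.map_mul, map_starRingEnd_nonsing_inv,
      map_starRingEnd_map_starRingEnd, conjTranspose_map_starRingEnd] using h
  subst hK₂ hM₂ hr₂
  rw [neg_inv_mul_sub_mul_eq_inv_mul hK_conj hK hSyl_conj, Matrix.mul_assoc]

theorem conjugate_sylvester_equation (N : ℕ)
    (K₁ M₁ : Matrix (Fin N) (Fin N) ℂ)
    (r₁ s₁ : Matrix (Fin N) (Fin 1) ℂ)
    (hK : IsUnit K₁.det)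
    (hspec : ∀ μ : ℂ, μ ∈ spectrum ℂ K₁ → μ ∉ spectrum ℂ (-(K₁.map (starRingEnd ℂ))⁻¹))
    (hSyl : K₁ * M₁ + M₁ * (K₁.map (starRingEnd ℂ))⁻¹ =
      -(r₁ * s₁.conjTranspose * (K₁.map (starRingEnd ℂ))⁻¹))
    (K₂ M₂ : Matrix (Fin N) (Fin N) ℂ) (r₂ : Matrix (Fin N) (Fin 1) ℂ)
    (hK₂ : K₂ = -(K₁.map (starRingEnd ℂ))⁻¹)
    (hM₂ : M₂ = M₁.map (starRingEnd ℂ))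
    (hr₂ : r₂ = (K₁.map (starRingEnd ℂ))⁻¹ * r₁.map (starRingEnd ℂ)) :
    K₂ * M₂ - M₂ * K₁ = r₂ * s₁.transpose :=
  conjugate_sylvester_equation_general N K₁ M₁ r₁ s₁ hK hSyl K₂ M₂ r₂ hK₂ hM₂ hr₂
end

section
/- Let k ∈ ℂ∖{0}, and define v₁ = 1 + |ρσ|²(|k|²+1)/(|k|²((|k|²+1)² − |ρσ|²)), v₄ = 1 + |ρσ|²(|k|²+1)/((|k|²+1)² − |ρσ|²), v₂v₃-product term |s₃|² = |ρσ|²(|k|²+1)⁴/(|k|²((|k|²+1)² − |ρσ|²)²). If |ρσ| < |k|²+1 then the one-soliton matrix v = (v₁, −s₃*; −s₃, v₄) is positive definite. -/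
open Matrix Complex
open scoped ComplexOrder

/-!
Write `K = |k|²`, `P = |ρσ|²` and `D = (K + 1)² - P`; the hypothesis `|ρσ| < K + 1` says `D > 0`.
Then `v₁ > 0`, and clearing denominators shows `det v = v₁ v₄ - |s₃|² = 1`. A Hermitian `2 × 2`
matrix with positive upper-left entry and positive determinant is positive definite, by
completing the square in its quadratic form.
-/

section FinTwo

variable {𝕜 : Type*} [RCLike 𝕜]

theorem ofReal_mul_star_dotProduct_fin_two_mulVec (a d : ℝ) (c : 𝕜) (x : Fin 2 → 𝕜) :
    (a : 𝕜) * (star x ⬝ᵥ (!![(a : 𝕜), star c; c, (d : 𝕜)] *ᵥ x)) =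
      ((‖a * x 0 + star c * x 1‖ ^ 2 + (a * d - ‖c‖ ^ 2) * ‖x 1‖ ^ 2 : ℝ) : 𝕜) := by
  simp only [dotProduct, Pi.star_apply, RCLike.star_def, mulVec, of_apply, cons_val',
    cons_val_fin_one, Fin.sum_univ_two, cons_val_zero, cons_val_one]
  push_cast
  simp only [← RCLike.conj_mul, map_add, map_mul, RCLike.conj_ofReal, RCLike.conj_conj]
  ring

theorem posDef_fin_two {a d : ℝ} {c : 𝕜} (ha : 0 < a) (hdet : ‖c‖ ^ 2 < a * d) :
    (!![(a : 𝕜), star c; c, (d : 𝕜)]).PosDef := by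
  refine PosDef.of_dotProduct_mulVec_pos ?_ fun x hx => ?_
  · ext i j; fin_cases i <;> fin_cases j <;> simp
  have hform : 0 < ‖a * x 0 + star c * x 1‖ ^ 2 + (a * d - ‖c‖ ^ 2) * ‖x 1‖ ^ 2 := by
    by_cases hx₁ : x 1 = 0
    · have hx₀ : x 0 ≠ 0 := fun hx₀ => hx (by ext i; fin_cases i <;> assumption)
      simp [hx₁, hx₀, ha.ne']
    · exact add_pos_of_nonneg_of_pos (sq_nonneg _)
        (mul_pos (sub_pos.2 hdet) (pow_pos (norm_pos_iff.2 hx₁) 2))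
  rw [← RCLike.ofReal_pos (K := 𝕜), ← ofReal_mul_star_dotProduct_fin_two_mulVec] at hform
  exact pos_of_mul_pos_right hform (RCLike.ofReal_nonneg.2 ha.le)

end FinTwo

theorem normSq_one_soliton_offDiag (k z : ℂ) :
    normSq (1 / k * (z * ((normSq k : ℂ) + 1) ^ 2 / (((normSq k : ℂ) + 1) ^ 2 - normSq z))) =
      normSq z * (normSq k + 1) ^ 4 / (normSq k * ((normSq k + 1) ^ 2 - normSq z) ^ 2) := by
  rw [← ofReal_one, ← ofReal_add, ← ofReal_pow, ← ofReal_sub]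
  simp only [map_mul, map_div₀, normSq_ofReal]
  -- `ring` cannot match `(D * D)⁻¹` with `(D ^ 2)⁻¹` once the sum `D` is expanded
  generalize (normSq k + 1) ^ 2 - normSq z = D
  ring

theorem one_soliton_det_eq_one {K P : ℝ} (hK : K ≠ 0) (hD : (K + 1) ^ 2 - P ≠ 0) :
    (1 + P * (K + 1) / (K * ((K + 1) ^ 2 - P))) * (1 + P * (K + 1) / ((K + 1) ^ 2 - P)) -
      P * (K + 1) ^ 4 / (K * ((K + 1) ^ 2 - P) ^ 2) = 1 := by
  field_simp
  ring

theorem one_soliton_positive_definite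
    (k ρ σ : ℂ) (hk : k ≠ 0)
    (hlt : ‖ρ * σ‖ < Complex.normSq k + 1)
    (v₁ v₄ : ℝ) (s₃ : ℂ)
    (hv₁ : v₁ = 1 + Complex.normSq (ρ * σ) * (Complex.normSq k + 1) /
        (Complex.normSq k * ((Complex.normSq k + 1) ^ 2 - Complex.normSq (ρ * σ))))
    (hv₄ : v₄ = 1 + Complex.normSq (ρ * σ) * (Complex.normSq k + 1) /
        ((Complex.normSq k + 1) ^ 2 - Complex.normSq (ρ * σ)))
    (hs₃ : s₃ = ((1 : ℂ) / k) *
        (ρ * σ * ((Complex.normSq k : ℂ) + 1) ^ 2 /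
          (((Complex.normSq k : ℂ) + 1) ^ 2 - (Complex.normSq (ρ * σ) : ℂ))))
    (v : Matrix (Fin 2) (Fin 2) ℂ)
    (hv : v = !![(v₁ : ℂ), -(starRingEnd ℂ) s₃; -s₃, (v₄ : ℂ)]) :
    v.PosDef := by
  have hK : 0 < normSq k := normSq_pos.2 hk
  have hD : 0 < (normSq k + 1) ^ 2 - normSq (ρ * σ) := by
    rw [← Complex.sq_norm (ρ * σ), sub_pos]
    exact pow_lt_pow_left₀ hlt (norm_nonneg _) two_ne_zero
  have hv₁_pos : 0 < v₁ := by
    rw [hv₁]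
    have := normSq_nonneg (ρ * σ)
    positivity
  have hdet : ‖-s₃‖ ^ 2 < v₁ * v₄ := by
    rw [norm_neg, Complex.sq_norm, hs₃, normSq_one_soliton_offDiag, hv₁, hv₄]
    linarith [one_soliton_det_eq_one hK.ne' hD.ne']
  simpa [hv] using posDef_fin_two hv₁_pos hdet
end
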